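/- arXiv:2404.04446 — 3 statements merged into one kernel-verified Lean document; each statement's English description precedes it below -/
import Mathlib

section
/- For every ρ ∈ (−1, 1), the value θ = f(ρ) satisfies the quadratic constraint ρ²·κxx·κyy − κxy² = (ρ² − 1)·(2·θ·κxx·κxy − θ²·κxx²), and moreover κxy − θ·κxx has the same sign as ρ (it is positive when ρ > 0, negative when ρ < 0, and zero when ρ = 0). -/
open Real

lemma div_sqrt_one_sub_sq_sq_mul {ρ : ℝ} (hρ : ρ ^ 2 < 1) :
    (ρ / √(1 - ρ ^ 2)) ^ 2 * (1 - ρ ^ 2) = ρ ^ 2 := by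
  have hpos : 0 < 1 - ρ ^ 2 := by linarith
  rw [div_pow, sq_sqrt hpos.le]
  field_simp

lemma sign_mul_div_sqrt_one_sub_sq {c ρ : ℝ} (hc : 0 < c) (hρ : ρ ^ 2 < 1) :
    SignType.sign (c * (ρ / √(1 - ρ ^ 2))) = SignType.sign ρ := by
  have hsqrt : 0 < √(1 - ρ ^ 2) := sqrt_pos.mpr (by linarith)
  rw [mul_div_assoc', mul_div_right_comm, sign_mul, sign_pos (div_pos hc hsqrt), one_mul]

/-- Writing `δ = κxy - θ κxx`, the right-hand side equals `(ρ² - 1)(κxy² - δ²)`, so the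
constraint is exactly `δ² (1 - ρ²) = (κxx κyy - κxy²) ρ²`. -/
lemma quadratic_constraint_of_sq_sub_mul {κxx κxy κyy θ ρ : ℝ}
    (h : (κxy - θ * κxx) ^ 2 * (1 - ρ ^ 2) = (κxx * κyy - κxy ^ 2) * ρ ^ 2) :
    ρ ^ 2 * κxx * κyy - κxy ^ 2 = (ρ ^ 2 - 1) * (2 * θ * κxx * κxy - θ ^ 2 * κxx ^ 2) := by
  linear_combination -h

/-- For every `ρ ∈ (−1, 1)`, the value `θ = f(ρ)` satisfies the quadratic
constraint `ρ²·κxx·κyy − κxy² = (ρ² − 1)·(2·θ·κxx·κxy − θ²·κxx²)`, and `κxy − θ·κxx` has the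
same sign as `ρ`. -/
theorem leakyIV_f_solves_quadratic
    (κxx κxy κyy : ℝ) (hκxx : 0 < κxx) (hdet : 0 < κxx * κyy - κxy ^ 2)
    (f : ℝ → ℝ)
    (hf : ∀ ρ : ℝ, f ρ =
      κxx⁻¹ * (κxy - Real.sqrt (κxx * κyy - κxy ^ 2) * (ρ / Real.sqrt (1 - ρ ^ 2)))) :
    ∀ ρ ∈ Set.Ioo (-1 : ℝ) 1,
      ρ ^ 2 * κxx * κyy - κxy ^ 2
          = (ρ ^ 2 - 1) * (2 * f ρ * κxx * κxy - (f ρ) ^ 2 * κxx ^ 2) ∧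
        (0 < ρ → 0 < κxy - f ρ * κxx) ∧
        (ρ < 0 → κxy - f ρ * κxx < 0) ∧
        (ρ = 0 → κxy - f ρ * κxx = 0) := by
  intro ρ ⟨hρ₁, hρ₂⟩
  have hρ : ρ ^ 2 < 1 := by nlinarith
  have hres : κxy - f ρ * κxx = √(κxx * κyy - κxy ^ 2) * (ρ / √(1 - ρ ^ 2)) := by
    rw [hf ρ]
    field_simp
    ring
  have hsign : SignType.sign (κxy - f ρ * κxx) = SignType.sign ρ := by
    rw [hres, sign_mul_div_sqrt_one_sub_sq (sqrt_pos.mpr hdet) hρ]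
  refine ⟨quadratic_constraint_of_sq_sub_mul ?_, fun h ↦ ?_, fun h ↦ ?_, fun h ↦ ?_⟩
  · rw [hres, mul_pow, sq_sqrt hdet.le, mul_assoc, div_sqrt_one_sub_sq_sq_mul hρ]
  · exact sign_eq_one_iff.mp (hsign.trans (sign_pos h))
  · exact sign_eq_neg_one_iff.mp (hsign.trans (sign_neg h))
  · exact sign_eq_zero_iff.mp (hsign.trans (sign_eq_zero_iff.mpr h))
end

section
/- Assume β ≠ 0 and 1 < p < ∞, and let θ* ∈ ℝ. If g_p(θ*) = τ̌_p (the true leakage coincides with the minimum leakage consistent with the data), then θ* is the unique minimizer θ̌_p of g_p; conversely, if g_p(θ*) > τ̌_p, then for τ = g_p(θ*) the sublevel set {θ : g_p(θ) ≤ τ} is a nondegenerate interval whose endpoints include θ* but which contains points other than θ*, so the ATE is not point identified. -/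
/-!
The `p`-th power `θ ↦ ∑ i, |α i - θ * β i| ^ p` of `g_p` is strictly convex, since `|·| ^ p` is
strictly convex for `p > 1` and `θ ↦ α i - θ * β i` is injective for some `i`; being a monotone
transform of it, `g_p` has the same minimizers and sublevel sets. Strict convexity makes the
minimizer unique. Above the minimum, the sublevel set through `θ*` is closed, convex and bounded
(one coordinate already grows linearly in `|θ|`), hence a compact interval, and `θ*` cannot lie
strictly inside it: there strict convexity would push the value strictly below the larger of the
two endpoint values, both of which are at most the value at `θ*`.
-/

/-- The leakage curve `g_p(θ) = ‖α − θ·β‖_p`, where `‖·‖_p` is the `ℓ^p` norm on `ℝ^d`. -/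
noncomputable def gLeak {d : ℕ} (p : ℝ) (α β : Fin d → ℝ) (θ : ℝ) : ℝ :=
  (∑ i, |α i - θ * β i| ^ p) ^ (1 / p)

open Set

theorem strictConvexOn_abs_rpow {p : ℝ} (hp : 1 < p) :
    StrictConvexOn ℝ univ fun t : ℝ => |t| ^ p := by
  refine ⟨convex_univ, fun x _ y _ hxy a b ha hb hab => ?_⟩
  simp only [smul_eq_mul]
  rcases eq_or_ne |x| |y| with habs | habs
  · obtain rfl : x = -y := (abs_eq_abs.mp habs).resolve_left hxy
    have hy : 0 < |y| := abs_pos.mpr fun h => hxy (by simp [h])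
    have hshrink : |a * -y + b * y| < |y| := by
      rw [show a * -y + b * y = (b - a) * y by ring, abs_mul]
      exact mul_lt_of_lt_one_left hy (abs_lt.mpr ⟨by linarith, by linarith⟩)
    calc |a * -y + b * y| ^ p < |y| ^ p := Real.rpow_lt_rpow (abs_nonneg _) hshrink (by linarith)
      _ = a * |-y| ^ p + b * |y| ^ p := by rw [abs_neg, ← add_mul, hab, one_mul]
  · calc |a * x + b * y| ^ p ≤ (a * |x| + b * |y|) ^ p := by
          refine Real.rpow_le_rpow (abs_nonneg _) ?_ (by linarith)
          simpa [abs_mul, abs_of_pos ha, abs_of_pos hb] using abs_add_le (a * x) (b * y)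
      _ < a * |x| ^ p + b * |y| ^ p :=
          (strictConvexOn_rpow hp).2 (abs_nonneg x) (abs_nonneg y) habs ha hb hab

theorem StrictConvexOn.sum_comp_sub_mul {ι : Type*} [Fintype ι] {f : ℝ → ℝ}
    (hf : StrictConvexOn ℝ univ f) (α β : ι → ℝ) (hβ : β ≠ 0) :
    StrictConvexOn ℝ univ fun θ => ∑ i, f (α i - θ * β i) := by
  obtain ⟨i₀, hi₀⟩ := Function.ne_iff.mp hβ
  refine ⟨convex_univ, fun x _ y _ hxy a b ha hb hab => ?_⟩
  have hcomb : ∀ i,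
      α i - (a * x + b * y) * β i = a * (α i - x * β i) + b * (α i - y * β i) :=
    fun i => by linear_combination α i * hab.symm
  simp only [smul_eq_mul, Finset.mul_sum, ← Finset.sum_add_distrib, hcomb]
  refine Finset.sum_lt_sum (fun i _ => hf.convexOn.2 trivial trivial ha.le hb.le hab)
    ⟨i₀, Finset.mem_univ _, hf.2 trivial trivial ?_ ha hb hab⟩
  exact fun h => hxy (mul_right_cancel₀ hi₀ (by linarith))

theorem StrictConvexOn.exists_setOf_le_eq_Icc {f : ℝ → ℝ} (hf : StrictConvexOn ℝ univ f)
    {x t : ℝ} (hbdd : Bornology.IsBounded {y | f y ≤ f x}) (ht : f t < f x) :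
    ∃ lo hi, lo < hi ∧ {y | f y ≤ f x} = Icc lo hi ∧ (x = lo ∨ x = hi) := by
  set S := {y | f y ≤ f x}
  have hcont : Continuous f := continuousOn_univ.mp (hf.convexOn.continuousOn isOpen_univ)
  have hconvex : Convex ℝ S := by simpa using hf.convexOn.convex_le (f x)
  obtain ⟨lo, hi, hS⟩ : ∃ lo hi, S = Icc lo hi :=
    ⟨_, _, eq_Icc_csInf_csSup_of_connected_bdd_closed (hconvex.isConnected ⟨x, le_refl (f x)⟩)
      hbdd.bddBelow hbdd.bddAbove (isClosed_le hcont continuous_const)⟩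
  have hxS : x ∈ Icc lo hi := hS ▸ le_refl (f x)
  have htS : t ∈ Icc lo hi := hS ▸ ht.le
  have hlt : lo < hi := by
    refine (hxS.1.trans hxS.2).lt_of_ne fun heq => ht.ne ?_
    rw [← heq, Icc_self, mem_singleton_iff] at hxS htS
    rw [htS, hxS]
  refine ⟨lo, hi, hlt, hS, ?_⟩
  by_contra! hinterior
  have hlo : f lo ≤ f x := (hS ▸ left_mem_Icc.mpr hlt.le : lo ∈ S)
  have hhi : f hi ≤ f x := (hS ▸ right_mem_Icc.mpr hlt.le : hi ∈ S)
  have hseg : x ∈ openSegment ℝ lo hi := by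
    rw [openSegment_eq_Ioo hlt]
    exact ⟨hxS.1.lt_of_ne' hinterior.1, hxS.2.lt_of_ne hinterior.2⟩
  exact (hf.lt_on_openSegment trivial trivial hlt.ne hseg).not_ge (max_le hlo hhi)

noncomputable def gLeakPow {d : ℕ} (p : ℝ) (α β : Fin d → ℝ) (θ : ℝ) : ℝ :=
  ∑ i, |α i - θ * β i| ^ p

section gLeak

variable {d : ℕ} {p : ℝ} {α β : Fin d → ℝ}

theorem gLeakPow_nonneg (θ : ℝ) : 0 ≤ gLeakPow p α β θ := by
  unfold gLeakPow
  positivity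

theorem gLeak_nonneg (θ : ℝ) : 0 ≤ gLeak p α β θ :=
  Real.rpow_nonneg (gLeakPow_nonneg θ) _

theorem gLeak_le_gLeak_iff (hp : 0 < p) (s t : ℝ) :
    gLeak p α β s ≤ gLeak p α β t ↔ gLeakPow p α β s ≤ gLeakPow p α β t :=
  Real.rpow_le_rpow_iff (gLeakPow_nonneg s) (gLeakPow_nonneg t) (one_div_pos.mpr hp)

theorem abs_sub_mul_le_gLeak (hp : 0 < p) (θ : ℝ) (i : Fin d) :
    |α i - θ * β i| ≤ gLeak p α β θ :=
  calc |α i - θ * β i| = (|α i - θ * β i| ^ p) ^ (1 / p) := by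
        rw [one_div, Real.rpow_rpow_inv (abs_nonneg _) hp.ne']
    _ ≤ gLeak p α β θ := by
        refine Real.rpow_le_rpow (by positivity) ?_ (one_div_pos.mpr hp).le
        exact Finset.single_le_sum (f := fun j => |α j - θ * β j| ^ p)
          (fun j _ => by positivity) (Finset.mem_univ i)

theorem isBounded_setOf_gLeak_le (hp : 0 < p) (hβ : β ≠ 0) (c : ℝ) :
    Bornology.IsBounded {θ | gLeak p α β θ ≤ c} := by
  obtain ⟨i, hi⟩ := Function.ne_iff.mp hβ
  refine (Metric.isBounded_closedBall (x := 0) (r := (|α i| + c) / |β i|)).subset fun θ hθ => ?_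
  rw [mem_closedBall_zero_iff, Real.norm_eq_abs, le_div_iff₀ (abs_pos.mpr hi), ← abs_mul]
  calc |θ * β i| ≤ |α i| + |α i - θ * β i| := by
        linarith [abs_sub_abs_le_abs_sub (θ * β i) (α i), abs_sub_comm (θ * β i) (α i)]
    _ ≤ |α i| + c := by gcongr; exact (abs_sub_mul_le_gLeak hp θ i).trans hθ

end gLeak

theorem point_identifiability_general
    {d : ℕ} (p : ℝ) (hp : 1 < p) (α β : Fin d → ℝ) (hβ : β ≠ 0) (θstar : ℝ) :
    (gLeak p α β θstar = (⨅ θ : ℝ, gLeak p α β θ) →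
      (∀ t : ℝ, gLeak p α β θstar ≤ gLeak p α β t) ∧
      (∀ θ : ℝ, (∀ t : ℝ, gLeak p α β θ ≤ gLeak p α β t) → θ = θstar)) ∧
    ((⨅ θ : ℝ, gLeak p α β θ) < gLeak p α β θstar →
      ∃ θlo θhi : ℝ, θlo < θhi ∧
        {θ : ℝ | gLeak p α β θ ≤ gLeak p α β θstar} = Set.Icc θlo θhi ∧
        (θstar = θlo ∨ θstar = θhi) ∧
        ∃ θ' ∈ Set.Icc θlo θhi, θ' ≠ θstar) := by
  have hp₀ : 0 < p := by linarith
  have hconvex : StrictConvexOn ℝ univ (gLeakPow p α β) :=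
    (strictConvexOn_abs_rpow hp).sum_comp_sub_mul α β hβ
  have hiff := gLeak_le_gLeak_iff (α := α) (β := β) hp₀
  have hsublevel : {θ | gLeak p α β θ ≤ gLeak p α β θstar} =
      {θ | gLeakPow p α β θ ≤ gLeakPow p α β θstar} :=
    ext fun θ => hiff θ θstar
  refine ⟨fun heq => ?_, fun hlt => ?_⟩
  · have hmin : ∀ t, gLeak p α β θstar ≤ gLeak p α β t :=
      fun t => heq ▸ ciInf_le ⟨0, by rintro _ ⟨s, rfl⟩; exact gLeak_nonneg s⟩ t
    refine ⟨hmin, fun θ hθ => hconvex.eq_of_isMinOn ?_ ?_ trivial trivial⟩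
    · exact isMinOn_univ_iff.mpr fun t => (hiff θ t).mp (hθ t)
    · exact isMinOn_univ_iff.mpr fun t => (hiff θstar t).mp (hmin t)
  · obtain ⟨t, ht⟩ := exists_lt_of_ciInf_lt hlt
    obtain ⟨lo, hi, hlohi, hIcc, hend⟩ := hconvex.exists_setOf_le_eq_Icc
      (hsublevel ▸ isBounded_setOf_gLeak_le hp₀ hβ _)
      ((lt_iff_lt_of_le_iff_le (hiff θstar t)).mp ht)
    rw [hsublevel]
    refine ⟨lo, hi, hlohi, hIcc, hend, t, ?_, fun h => ht.ne (congrArg _ h)⟩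
    exact hIcc ▸ (hiff t θstar).mp ht.le

/-- **point-identifiability clause of Theorem 1.** Assume `β ≠ 0`, `1 < p < ∞`.
If `g_p(θ*) = τ̌_p` then `θ*` is the unique minimizer of `g_p`; conversely, if
`g_p(θ*) > τ̌_p`, then for `τ = g_p(θ*)` the sublevel set `{θ : g_p(θ) ≤ τ}` is a
nondegenerate interval whose endpoints include `θ*` but which contains points other than
`θ*`, so the ATE is not point identified. -/
theorem point_identifiability
    {d : ℕ} (hd : 1 ≤ d) (p : ℝ) (hp : 1 < p) (α β : Fin d → ℝ) (hβ : β ≠ 0) (θstar : ℝ) :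
    (gLeak p α β θstar = (⨅ θ : ℝ, gLeak p α β θ) →
      (∀ t : ℝ, gLeak p α β θstar ≤ gLeak p α β t) ∧
      (∀ θ : ℝ, (∀ t : ℝ, gLeak p α β θ ≤ gLeak p α β t) → θ = θstar)) ∧
    ((⨅ θ : ℝ, gLeak p α β θ) < gLeak p α β θstar →
      ∃ θlo θhi : ℝ, θlo < θhi ∧
        {θ : ℝ | gLeak p α β θ ≤ gLeak p α β θstar} = Set.Icc θlo θhi ∧
        (θstar = θlo ∨ θstar = θhi) ∧
        ∃ θ' ∈ Set.Icc θlo θhi, θ' ≠ θstar) :=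
  point_identifiability_general p hp α β hβ θstar
end

section
/- Assume β ≠ 0 and τ ≥ τ̌₂, where τ̌₂ = min over θ of ‖α − θ·β‖₂. Then the minimum and maximum elements of the set {θ ∈ ℝ : ‖α − θ·β‖₂ ≤ τ} are exactly θ̌₂ − (β·β)⁻¹·√( (β·β)(τ² − α·α) + (α·β)² ) and θ̌₂ + (β·β)⁻¹·√( (β·β)(τ² − α·α) + (α·β)² ), respectively, where θ̌₂ = (β·β)⁻¹ (β·α); in particular the discriminant (β·β)(τ² − α·α) + (α·β)² is nonnegative under these hypotheses. -/
/-!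
Completing the square, `‖β‖² ‖α - θβ‖² = (‖β‖² θ - ⟪α, β⟫)² + (‖α‖² ‖β‖² - ⟪α, β⟫²)`, shows that
`‖α - θβ‖ ≤ τ` is a quadratic inequality in `θ` whose solution set is the interval between the two
roots. The infimum over `θ` is attained at `θ = ⟪α, β⟫ / ‖β‖²`, so `τ` bounding it makes the
discriminant nonnegative.
-/

open Set
open scoped RealInnerProductSpace

theorem setOf_sq_mul_sub_le_eq_Icc {b c D : ℝ} (hb : 0 < b) (hD : 0 ≤ D) :
    {θ | (b * θ - c) ^ 2 ≤ D} = Icc (b⁻¹ * c - b⁻¹ * √D) (b⁻¹ * c + b⁻¹ * √D) := by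
  ext θ
  rw [mem_ofPred_eq, Real.sq_le hD, mem_Icc, ← mul_sub, ← mul_add, inv_mul_le_iff₀ hb,
    le_inv_mul_iff₀ hb]
  constructor <;> rintro ⟨h₁, h₂⟩ <;> constructor <;> linarith

section InnerProductSpace

variable {E : Type*} [NormedAddCommGroup E] [InnerProductSpace ℝ E] (α β : E)

theorem sq_norm_mul_norm_sub_smul_sq (θ : ℝ) :
    ‖β‖ ^ 2 * ‖α - θ • β‖ ^ 2 =
      (‖β‖ ^ 2 * θ - ⟪α, β⟫) ^ 2 + (‖α‖ ^ 2 * ‖β‖ ^ 2 - ⟪α, β⟫ ^ 2) := by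
  rw [norm_sub_sq_real, norm_smul, inner_smul_right, mul_pow, Real.norm_eq_abs, sq_abs]
  ring

variable {β}

theorem norm_sub_smul_le_iff (hβ : β ≠ 0) {τ : ℝ} (hτ : 0 ≤ τ) (θ : ℝ) :
    ‖α - θ • β‖ ≤ τ ↔
      (‖β‖ ^ 2 * θ - ⟪α, β⟫) ^ 2 ≤ ‖β‖ ^ 2 * (τ ^ 2 - ‖α‖ ^ 2) + ⟪α, β⟫ ^ 2 := by
  have hb : 0 < ‖β‖ ^ 2 := by positivity
  rw [← pow_le_pow_iff_left₀ (norm_nonneg _) hτ two_ne_zero, ← mul_le_mul_iff_of_pos_left hb,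
    sq_norm_mul_norm_sub_smul_sq]
  constructor <;> intro h <;> linarith

theorem norm_sub_inner_div_smul_le (hβ : β ≠ 0) (θ : ℝ) :
    ‖α - (⟪α, β⟫ / ‖β‖ ^ 2) • β‖ ≤ ‖α - θ • β‖ := by
  have hb : 0 < ‖β‖ ^ 2 := by positivity
  rw [← pow_le_pow_iff_left₀ (norm_nonneg _) (norm_nonneg _) two_ne_zero,
    ← mul_le_mul_iff_of_pos_left hb, sq_norm_mul_norm_sub_smul_sq, sq_norm_mul_norm_sub_smul_sq,
    mul_div_cancel₀ _ hb.ne', sub_self]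
  linarith [sq_nonneg (‖β‖ ^ 2 * θ - ⟪α, β⟫)]

theorem discriminant_nonneg_of_iInf_le (hβ : β ≠ 0) {τ : ℝ}
    (hτ : ⨅ θ : ℝ, ‖α - θ • β‖ ≤ τ) :
    0 ≤ ‖β‖ ^ 2 * (τ ^ 2 - ‖α‖ ^ 2) + ⟪α, β⟫ ^ 2 := by
  have hmin : ‖α - (⟪α, β⟫ / ‖β‖ ^ 2) • β‖ ≤ τ :=
    (le_ciInf (norm_sub_inner_div_smul_le α hβ)).trans hτ
  have hτ₀ : 0 ≤ τ := (norm_nonneg _).trans hmin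
  exact (sq_nonneg _).trans ((norm_sub_smul_le_iff α hβ hτ₀ _).1 hmin)

theorem setOf_norm_sub_smul_le_eq_Icc (hβ : β ≠ 0) {τ : ℝ}
    (hτ : ⨅ θ : ℝ, ‖α - θ • β‖ ≤ τ) :
    {θ : ℝ | ‖α - θ • β‖ ≤ τ} =
      Icc ((‖β‖ ^ 2)⁻¹ * ⟪α, β⟫ - (‖β‖ ^ 2)⁻¹ * √(‖β‖ ^ 2 * (τ ^ 2 - ‖α‖ ^ 2) + ⟪α, β⟫ ^ 2))
        ((‖β‖ ^ 2)⁻¹ * ⟪α, β⟫ + (‖β‖ ^ 2)⁻¹ * √(‖β‖ ^ 2 * (τ ^ 2 - ‖α‖ ^ 2) + ⟪α, β⟫ ^ 2)) := by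
  have hτ₀ : 0 ≤ τ := (Real.iInf_nonneg fun _ => norm_nonneg _).trans hτ
  rw [← setOf_sq_mul_sub_le_eq_Icc (by positivity) (discriminant_nonneg_of_iInf_le α hβ hτ)]
  ext θ
  exact norm_sub_smul_le_iff α hβ hτ₀ θ

end InnerProductSpace

theorem closed_form_L2_bounds_general
    {d : ℕ} (α β : Fin d → ℝ) (hβ : β ≠ 0) (τ : ℝ)
    (hτ : (⨅ θ : ℝ, Real.sqrt (∑ i, (α i - θ * β i) ^ 2)) ≤ τ) :
    0 ≤ (∑ i, β i * β i) * (τ ^ 2 - ∑ i, α i * α i) + (∑ i, α i * β i) ^ 2 ∧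
    IsLeast {θ : ℝ | Real.sqrt (∑ i, (α i - θ * β i) ^ 2) ≤ τ}
      ((∑ i, β i * β i)⁻¹ * (∑ i, β i * α i) -
        (∑ i, β i * β i)⁻¹ *
          Real.sqrt ((∑ i, β i * β i) * (τ ^ 2 - ∑ i, α i * α i) + (∑ i, α i * β i) ^ 2)) ∧
    IsGreatest {θ : ℝ | Real.sqrt (∑ i, (α i - θ * β i) ^ 2) ≤ τ}
      ((∑ i, β i * β i)⁻¹ * (∑ i, β i * α i) +
        (∑ i, β i * β i)⁻¹ *
          Real.sqrt ((∑ i, β i * β i) * (τ ^ 2 - ∑ i, α i * α i) + (∑ i, α i * β i) ^ 2)) := by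
  set a := WithLp.toLp 2 α
  set b := WithLp.toLp 2 β
  have hb : b ≠ 0 := by simpa [b] using hβ
  have hnorm (θ : ℝ) : √(∑ i, (α i - θ * β i) ^ 2) = ‖a - θ • b‖ := by
    simp [a, b, EuclideanSpace.norm_eq]
  have hinner (u v : Fin d → ℝ) : ∑ i, u i * v i = ⟪WithLp.toLp 2 u, WithLp.toLp 2 v⟫ := by
    simp [PiLp.inner_apply, mul_comm]
  simp_rw [hnorm] at hτ ⊢
  rw [hinner β α, real_inner_comm, hinner α β, hinner α α, hinner β β,
    real_inner_self_eq_norm_sq, real_inner_self_eq_norm_sq]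
  have hD := discriminant_nonneg_of_iInf_le a hb hτ
  have hr : 0 ≤ (‖b‖ ^ 2)⁻¹ * √(‖b‖ ^ 2 * (τ ^ 2 - ‖a‖ ^ 2) + ⟪a, b⟫ ^ 2) := by positivity
  rw [setOf_norm_sub_smul_le_eq_Icc a hb hτ]
  exact ⟨hD, isLeast_Icc (by linarith), isGreatest_Icc (by linarith)⟩

/-- **Corollary 2.** Assume `β ≠ 0` and `τ ≥ τ̌₂ = ⨅ θ, ‖α − θ·β‖₂`. Then the
discriminant `(β·β)(τ² − α·α) + (α·β)²` is nonnegative, and the minimum and maximum elements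
of `{θ : ‖α − θ·β‖₂ ≤ τ}` are `θ̌₂ ∓ (β·β)⁻¹·√((β·β)(τ² − α·α) + (α·β)²)`, where
`θ̌₂ = (β·β)⁻¹ (β·α)`. -/
theorem closed_form_L2_bounds
    {d : ℕ} (hd : 1 ≤ d) (α β : Fin d → ℝ) (hβ : β ≠ 0) (τ : ℝ)
    (hτ : (⨅ θ : ℝ, Real.sqrt (∑ i, (α i - θ * β i) ^ 2)) ≤ τ) :
    0 ≤ (∑ i, β i * β i) * (τ ^ 2 - ∑ i, α i * α i) + (∑ i, α i * β i) ^ 2 ∧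
    IsLeast {θ : ℝ | Real.sqrt (∑ i, (α i - θ * β i) ^ 2) ≤ τ}
      ((∑ i, β i * β i)⁻¹ * (∑ i, β i * α i) -
        (∑ i, β i * β i)⁻¹ *
          Real.sqrt ((∑ i, β i * β i) * (τ ^ 2 - ∑ i, α i * α i) + (∑ i, α i * β i) ^ 2)) ∧
    IsGreatest {θ : ℝ | Real.sqrt (∑ i, (α i - θ * β i) ^ 2) ≤ τ}
      ((∑ i, β i * β i)⁻¹ * (∑ i, β i * α i) +
        (∑ i, β i * β i)⁻¹ *
          Real.sqrt ((∑ i, β i * β i) * (τ ^ 2 - ∑ i, α i * α i) + (∑ i, α i * β i) ^ 2)) :=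
  closed_form_L2_bounds_general α β hβ τ hτ
end
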